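/- For all n ≥ 1 and k ∈ ℤ, the difference of degenerate poly-Bernoulli polynomials satisfies β_n^{(k)}(x+1|λ) − β_n^{(k)}(x|λ) = Σ_{p=1}^{n} ( Σ_{m=0}^{p−1} ((−1)^{m+p+1}/(m+1)^k) (m+1)! S_2(p,m+1) ) C(n,p) (x|λ)_{n−p}. -/

import Mathlib

/-!
Subtracting the defining identity at `x` from the one at `x + 1` and using
`(1+λt)^{(x+1)/λ} = (1+λt)^{x/λ} (1+λt)^{1/λ}` (a Vandermonde identity for `(x|λ)ₙ`) gives, after
cancelling the nonzero series `(1+λt)^{1/λ} - 1`,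
`Σₙ (βₙ⁽ᵏ⁾(x+1|λ) − βₙ⁽ᵏ⁾(x|λ)) tⁿ/n! = Li_k(1 − e^{−t}) (1+λt)^{x/λ}`.
The coefficients of `Li_k(1 − e^{−t})` follow from
`(1 − e^{−t})^m = Σ_p (−1)^{p+m} m! S₂(p,m) t^p/p!`, proved by induction on `m` and `p` from
`d/dt (1 − e^{−t}) = 1 − (1 − e^{−t})` and the recurrence of `S₂`.
-/

open Finset

/-- The generalized falling factorial `(x|λ)ₙ = x(x−λ)(x−2λ)⋯(x−(n−1)λ)`. -/
noncomputable def genFall (lam x : ℂ) (n : ℕ) : ℂ :=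
  ∏ i ∈ Finset.range n, (x - (i : ℂ) * lam)

/-- The formal power series `(1+λt)^{x/λ} = Σ_{n≥0} (x|λ)ₙ tⁿ/n!`. -/
noncomputable def degExp (lam x : ℂ) : PowerSeries ℂ :=
  PowerSeries.mk fun n => genFall lam x n / (n.factorial : ℂ)

/-- The formal power series `1 - e^{-t}`. -/
noncomputable def oneSubExpNeg : PowerSeries ℂ :=
  PowerSeries.mk fun n => if n = 0 then 0 else -((-1 : ℂ) ^ n) / (n.factorial : ℂ)

/-- The formal power series `Li_k(1 - e^{-t}) = Σ_{n≥1} (1-e^{-t})ⁿ/nᵏ`; since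
`(1-e^{-t})ⁿ` has order at least `n`, the coefficient of `tˡ` only involves `n ≤ l`. -/
noncomputable def polyLogComp (k : ℤ) : PowerSeries ℂ :=
  PowerSeries.mk fun l =>
    ∑ n ∈ Finset.Icc 1 l, ((n : ℂ) ^ k)⁻¹ * PowerSeries.coeff l (oneSubExpNeg ^ n)

/-- Stirling numbers of the second kind `S₂(n, k)`. -/
def S2 : ℕ → ℕ → ℕ
  | 0, 0 => 1
  | 0, _ + 1 => 0
  | _ + 1, 0 => 0
  | n + 1, k + 1 => (k + 1) * S2 n (k + 1) + S2 n k

open PowerSeries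

theorem genFall_succ (lam x : ℂ) (n : ℕ) :
    genFall lam x (n + 1) = genFall lam x n * (x - n * lam) :=
  prod_range_succ _ _

theorem genFall_add (lam x y : ℂ) (n : ℕ) :
    genFall lam (x + y) n =
      ∑ ij ∈ antidiagonal n, (n.choose ij.1 : ℂ) * (genFall lam x ij.1 * genFall lam y ij.2) := by
  induction n with
  | zero => simp [genFall]
  | succ n ih =>
    rw [sum_antidiagonal_choose_succ_mul fun i j => genFall lam x i * genFall lam y j,
      ← sum_add_distrib, genFall_succ, ih, sum_mul]
    refine sum_congr rfl fun ij hij => ?_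
    have hn : ij.1 + ij.2 = n := mem_antidiagonal.mp hij
    rw [Nat.choose_symm_of_eq_add hn.symm, genFall_succ, genFall_succ, ← hn]
    push_cast
    ring

noncomputable def egf (a : ℕ → ℂ) : PowerSeries ℂ :=
  mk fun n => a n / n.factorial

theorem coeff_egf (a : ℕ → ℂ) (n : ℕ) : coeff n (egf a) = a n / n.factorial :=
  coeff_mk _ _

theorem egf_injective : Function.Injective egf := fun a b h => funext fun n => by
  have hn := congrArg (coeff n) h
  rwa [coeff_egf, coeff_egf, div_left_inj' (Nat.cast_ne_zero.mpr n.factorial_ne_zero)] at hn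

theorem egf_sub (a b : ℕ → ℂ) : egf a - egf b = egf fun n => a n - b n := by
  ext n
  simp only [map_sub, coeff_egf, sub_div]

theorem egf_mul (a b : ℕ → ℂ) :
    egf a * egf b = egf fun n => ∑ ij ∈ antidiagonal n, (n.choose ij.1 : ℂ) * (a ij.1 * b ij.2) := by
  ext n
  rw [coeff_mul, coeff_egf, sum_div]
  refine sum_congr rfl fun ⟨i, j⟩ hij => ?_
  obtain rfl : i + j = n := mem_antidiagonal.mp hij
  have : ((i + j).factorial : ℂ) ≠ 0 := Nat.cast_ne_zero.mpr (i + j).factorial_ne_zero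
  rw [coeff_egf, coeff_egf, Nat.cast_add_choose]
  field_simp

theorem eq_egf_iff (f : PowerSeries ℂ) (a : ℕ → ℂ) :
    f = egf a ↔ ∀ n, (n.factorial : ℂ) * coeff n f = a n := by
  have hfac (n : ℕ) : (n.factorial : ℂ) ≠ 0 := Nat.cast_ne_zero.mpr n.factorial_ne_zero
  refine ⟨fun h n => ?_, fun h => ?_⟩
  · rw [h, coeff_egf, mul_div_cancel₀ _ (hfac n)]
  · ext n
    rw [coeff_egf, eq_div_iff (hfac n), mul_comm, h]

theorem degExp_eq_egf (lam x : ℂ) : degExp lam x = egf (genFall lam x) := rfl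

theorem degExp_add (lam x y : ℂ) : degExp lam (x + y) = degExp lam x * degExp lam y := by
  rw [degExp_eq_egf, degExp_eq_egf, degExp_eq_egf, egf_mul]
  exact congrArg egf (funext (genFall_add lam x y))

theorem degExp_one_sub_one_ne_zero (lam : ℂ) : degExp lam 1 - 1 ≠ 0 := by
  intro h
  simpa [degExp_eq_egf, coeff_egf, genFall] using congrArg (coeff 1) h

theorem derivative_oneSubExpNeg : derivative ℂ oneSubExpNeg = 1 - oneSubExpNeg := by
  ext n
  rcases n with _ | n
  · simp [coeff_derivative, oneSubExpNeg]
  · simp only [coeff_derivative, oneSubExpNeg, coeff_mk, map_sub, coeff_one, Nat.succ_ne_zero,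
      if_false, Nat.factorial_succ (n + 1), pow_succ]
    have : (n + 1 + 1 : ℂ) ≠ 0 := by norm_cast
    push_cast
    field_simp
    ring

theorem factorial_mul_coeff_succ {R : Type*} [CommSemiring R] (f : PowerSeries R) (n : ℕ) :
    ((n + 1).factorial : R) * coeff (n + 1) f = n.factorial * coeff n (derivative R f) := by
  rw [coeff_derivative, Nat.factorial_succ]
  push_cast
  ring

theorem oneSubExpNeg_pow (m : ℕ) :
    oneSubExpNeg ^ m = egf fun p => (-1) ^ (p + m) * m.factorial * S2 p m := by
  induction m with
  | zero =>
    ext (_ | p) <;> simp [coeff_egf, coeff_one, S2]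
  | succ m ih =>
    rw [eq_egf_iff] at ih ⊢
    have hD : derivative ℂ (oneSubExpNeg ^ (m + 1))
        = (m + 1) • (oneSubExpNeg ^ m - oneSubExpNeg ^ (m + 1)) := by
      rw [Derivation.leibniz_pow, derivative_oneSubExpNeg]
      simp only [Nat.add_sub_cancel, smul_eq_mul, mul_one_sub, ← pow_succ]
    intro p
    induction p with
    | zero => simp [oneSubExpNeg, S2]
    | succ p ihp =>
      rw [factorial_mul_coeff_succ, hD, map_nsmul, map_sub, nsmul_eq_mul, mul_left_comm, mul_sub,
        ih, ihp]
      simp only [S2, Nat.factorial_succ m]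
      push_cast
      ring

noncomputable def polyLogCoeff (k : ℤ) (p : ℕ) : ℂ :=
  ∑ m ∈ range p, (-1 : ℂ) ^ (m + p + 1) / ((m + 1 : ℕ) : ℂ) ^ k * ((m + 1).factorial : ℂ)
    * (S2 p (m + 1) : ℂ)

theorem polyLogComp_eq_egf (k : ℤ) : polyLogComp k = egf (polyLogCoeff k) := by
  ext p
  rw [polyLogComp, coeff_mk, coeff_egf, polyLogCoeff, sum_div, ← Ico_add_one_right_eq_Icc,
    sum_Ico_eq_sum_range, Nat.add_sub_cancel]
  refine sum_congr rfl fun m _ => ?_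
  rw [oneSubExpNeg_pow, coeff_egf, add_comm 1 m, add_comm p]
  ring

theorem degenerate_poly_bernoulli_difference_general (k : ℤ) (lam : ℂ) (βk : ℕ → ℂ → ℂ)
    (hβk : ∀ x : ℂ,
      (PowerSeries.mk fun n => βk n x / (n.factorial : ℂ)) * (degExp lam 1 - 1)
        = polyLogComp k * degExp lam x)
    (n : ℕ) (x : ℂ) :
    βk n (x + 1) - βk n x = ∑ p ∈ Finset.Icc 1 n,
      (∑ m ∈ Finset.range p,
        (-1 : ℂ) ^ (m + p + 1) / ((m + 1 : ℕ) : ℂ) ^ k * ((m + 1).factorial : ℂ)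
          * (S2 p (m + 1) : ℂ))
        * (n.choose p : ℂ) * genFall lam x (n - p) := by
  have hβ (y : ℂ) : egf (βk · y) * (degExp lam 1 - 1) = polyLogComp k * degExp lam y := hβk y
  have hdiff : egf (fun n => βk n (x + 1) - βk n x) = polyLogComp k * degExp lam x := by
    refine mul_right_cancel₀ (degExp_one_sub_one_ne_zero lam) ?_
    rw [← egf_sub, sub_mul, hβ, hβ, degExp_add]
    ring
  rw [polyLogComp_eq_egf, degExp_eq_egf, egf_mul] at hdiff
  rw [congrFun (egf_injective hdiff) n, Nat.sum_antidiagonal_eq_sum_range_succ_mk,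
    sum_range_eq_add_Ico _ (by omega : 0 < n + 1), Ico_add_one_right_eq_Icc]
  simp only [polyLogCoeff, sum_range_zero, zero_mul, mul_zero, zero_add]
  exact sum_congr rfl fun p _ => by ring

/-- for `n ≥ 1`, `βₙ⁽ᵏ⁾(x+1|λ) − βₙ⁽ᵏ⁾(x|λ) = Σ_{p=1}^{n}
(Σ_{m=0}^{p−1} ((−1)^{m+p+1}/(m+1)ᵏ)(m+1)! S₂(p,m+1)) C(n,p) (x|λ)_{n−p}`. -/
theorem degenerate_poly_bernoulli_difference (k : ℤ) (lam : ℂ) (βk : ℕ → ℂ → ℂ)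
    (hβk : ∀ x : ℂ,
      (PowerSeries.mk fun n => βk n x / (n.factorial : ℂ)) * (degExp lam 1 - 1)
        = polyLogComp k * degExp lam x)
    (n : ℕ) (hn : 1 ≤ n) (x : ℂ) :
    βk n (x + 1) - βk n x = ∑ p ∈ Finset.Icc 1 n,
      (∑ m ∈ Finset.range p,
        (-1 : ℂ) ^ (m + p + 1) / ((m + 1 : ℕ) : ℂ) ^ k * ((m + 1).factorial : ℂ)
          * (S2 p (m + 1) : ℂ))
        * (n.choose p : ℂ) * genFall lam x (n - p) :=
  degenerate_poly_bernoulli_difference_general k lam βk hβk n x
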